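/- Let n ≥ 2 be an integer, λ ≠ 0 a real number, and μ > 0. Then there exists a constant y₀ > 0 and a twice continuously differentiable function r : [0, y₀) → ℝ such that r(y) > 0 and r(y) > y·r'(y) for all 0 ≤ y < y₀, r(0) = μ, r'(0) = 0, r''(0) = (n − 1 − 1/λ)/μ, and r''(y)/(1 + r'(y)²) = (n-1)/r(y) − (1 + r'(y)²)/(λ(r(y) − y·r'(y))) for all 0 < y < y₀; moreover such a solution is unique on [0, y₀). -/

import Mathlib

open Set

/-- `r : [0,y₀) → ℝ` (modelled as a function on `ℝ` with all conditions imposed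
on `Set.Ico 0 y₀`, and one-sided derivatives `derivWithin · (Set.Ico 0 y₀)`) is
a solution of the initial value problem for the inverse mean curvature flow
soliton ODE on `[0, y₀)`. -/
def IsLocalSolution (n : ℕ) (lam mu y₀ : ℝ) (r : ℝ → ℝ) : Prop :=
  ContDiffOn ℝ 2 r (Set.Ico 0 y₀) ∧
  (∀ y ∈ Set.Ico (0 : ℝ) y₀, 0 < r y) ∧
  (∀ y ∈ Set.Ico (0 : ℝ) y₀,
    y * derivWithin r (Set.Ico 0 y₀) y < r y) ∧
  r 0 = mu ∧
  derivWithin r (Set.Ico 0 y₀) 0 = 0 ∧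
  derivWithin (derivWithin r (Set.Ico 0 y₀)) (Set.Ico 0 y₀) 0 =
    ((n : ℝ) - 1 - 1 / lam) / mu ∧
  (∀ y ∈ Set.Ioo (0 : ℝ) y₀,
    derivWithin (derivWithin r (Set.Ico 0 y₀)) (Set.Ico 0 y₀) y /
        (1 + (derivWithin r (Set.Ico 0 y₀) y) ^ 2) =
      ((n : ℝ) - 1) / r y -
        (1 + (derivWithin r (Set.Ico 0 y₀) y) ^ 2) /
          (lam * (r y - y * derivWithin r (Set.Ico 0 y₀) y)))

noncomputable def solG (n : ℕ) (lam : ℝ) (p : ℝ × ℝ × ℝ) : ℝ :=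
  (1 + p.2.2 ^ 2) * (((n : ℝ) - 1) / p.2.1 - (1 + p.2.2 ^ 2) / (lam * (p.2.1 - p.1 * p.2.2)))

noncomputable def solV (n : ℕ) (lam : ℝ) (p : ℝ × ℝ × ℝ) : ℝ × ℝ × ℝ :=
  (1, p.2.2, solG n lam p)

theorem contDiffAt_solV (n : ℕ) {lam : ℝ} (hlam : lam ≠ 0) {p : ℝ × ℝ × ℝ}
    (h1 : p.2.1 ≠ 0) (h2 : p.2.1 - p.1 * p.2.2 ≠ 0) :
    ContDiffAt ℝ 1 (solV n lam) p := by
  unfold solV solG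
  apply ContDiffAt.prodMk contDiffAt_const
  apply ContDiffAt.prodMk
  · fun_prop
  · apply ContDiffAt.mul (by fun_prop)
    apply ContDiffAt.sub
    · exact ContDiffAt.div contDiffAt_const (by fun_prop) h1
    · exact ContDiffAt.div (by fun_prop) (by fun_prop) (mul_ne_zero hlam h2)

theorem hd_fst {f : ℝ → ℝ × ℝ × ℝ} {v : ℝ × ℝ × ℝ} {t : ℝ} (h : HasDerivAt f v t) :
    HasDerivAt (fun s => (f s).1) v.1 t :=
  ((ContinuousLinearMap.fst ℝ ℝ (ℝ × ℝ)).hasFDerivAt.comp_hasDerivAt t h)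

theorem hd_snd_fst {f : ℝ → ℝ × ℝ × ℝ} {v : ℝ × ℝ × ℝ} {t : ℝ} (h : HasDerivAt f v t) :
    HasDerivAt (fun s => (f s).2.1) v.2.1 t :=
  ((ContinuousLinearMap.fst ℝ ℝ ℝ).hasFDerivAt.comp_hasDerivAt t
    ((ContinuousLinearMap.snd ℝ ℝ (ℝ × ℝ)).hasFDerivAt.comp_hasDerivAt t h))

theorem hd_snd_snd {f : ℝ → ℝ × ℝ × ℝ} {v : ℝ × ℝ × ℝ} {t : ℝ} (h : HasDerivAt f v t) :
    HasDerivAt (fun s => (f s).2.2) v.2.2 t :=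
  ((ContinuousLinearMap.snd ℝ ℝ ℝ).hasFDerivAt.comp_hasDerivAt t
    ((ContinuousLinearMap.snd ℝ ℝ (ℝ × ℝ)).hasFDerivAt.comp_hasDerivAt t h))

theorem solG_init (n : ℕ) {lam mu : ℝ} (hlam : lam ≠ 0) (hmu : mu ≠ 0) :
    solG n lam (0, mu, 0) = ((n : ℝ) - 1 - 1 / lam) / mu := by
  unfold solG
  simp only
  field_simp
  simp [hmu]

/-- The full existence package. -/
theorem exists_package (n : ℕ) {lam mu : ℝ} (hlam : lam ≠ 0) (hmu : 0 < mu) :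
    ∃ ε > (0:ℝ), ∃ f : ℝ → ℝ × ℝ × ℝ, f 0 = (0, mu, 0) ∧
      (∀ t ∈ Ioo (-ε) ε, HasDerivAt f (solV n lam (f t)) t) ∧
      (∀ t ∈ Ioo (-ε) ε, (f t).1 = t) ∧
      (∀ t ∈ Ioo (-ε) ε, 0 < (f t).2.1 ∧ 0 < (f t).2.1 - t * (f t).2.2) := by
  have hx₀ : ContDiffAt ℝ 1 (solV n lam) ((0:ℝ), mu, (0:ℝ)) := by
    apply contDiffAt_solV n hlam <;> simp [hmu.ne']
  obtain ⟨f, hf0, ε, hε, hf'⟩ := hx₀.exists_forall_mem_closedBall_exists_eq_forall_mem_Ioo_hasDerivAt₀ 0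
  rw [zero_sub, zero_add] at hf'
  have h0mem : (0:ℝ) ∈ Ioo (-ε) ε := ⟨neg_lt_zero.mpr hε, hε⟩
  -- first component is the identity
  have hid : ∀ t ∈ Ioo (-ε) ε, (f t).1 = t := by
    have := ODE_solution_unique_of_mem_Ioo (v := fun _ _ => (1:ℝ)) (s := fun _ => univ)
      (K := 0) (f := fun t => (f t).1) (g := id) (t₀ := 0)
      (fun _ _ => (LipschitzWith.const 1).lipschitzOnWith) h0mem
      (fun t ht => ⟨hd_fst (hf' t ht), trivial⟩)
      (fun t ht => ⟨hasDerivAt_id t, trivial⟩) (by simp [hf0])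
    exact fun t ht => this ht
  -- positivity near 0
  have hrc : ContinuousAt (fun t => (f t).2.1) 0 := (hd_snd_fst (hf' 0 h0mem)).continuousAt
  have hwc : ContinuousAt (fun t => (f t).2.2) 0 := (hd_snd_snd (hf' 0 h0mem)).continuousAt
  have hval : (f 0).2.1 = mu ∧ (f 0).2.2 = 0 := by rw [hf0]; exact ⟨rfl, rfl⟩
  have hc2 : ContinuousAt (fun t => (f t).2.1 - t * (f t).2.2) 0 :=
    hrc.sub (continuousAt_id.mul hwc)
  have hev : ∀ᶠ t in nhds 0, 0 < (f t).2.1 ∧ 0 < (f t).2.1 - t * (f t).2.2 := by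
    have h1 : ∀ᶠ t in nhds (0:ℝ), 0 < (f t).2.1 :=
      hrc.eventually_mem (s := Ioi 0) (by rw [hval.1]; exact Ioi_mem_nhds hmu)
    have h2 : ∀ᶠ t in nhds (0:ℝ), 0 < (f t).2.1 - t * (f t).2.2 :=
      hc2.eventually_mem (s := Ioi 0)
        (by simp only [hval.1, hval.2, mul_zero, sub_zero]; exact Ioi_mem_nhds hmu)
    exact h1.and h2
  rw [Metric.eventually_nhds_iff] at hev
  obtain ⟨δ, hδ, hball⟩ := hev
  have hle1 : min (ε/2) δ ≤ ε/2 := min_le_left _ _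
  have hle2 : min (ε/2) δ ≤ δ := min_le_right _ _
  have hsub : Ioo (-(min (ε/2) δ)) (min (ε/2) δ) ⊆ Ioo (-ε) ε := fun t ht =>
    ⟨by have := ht.1; linarith, by have := ht.2; linarith⟩
  refine ⟨min (ε/2) δ, lt_min (half_pos hε) hδ, f, hf0,
    fun t ht => hf' t (hsub ht), fun t ht => hid t (hsub ht), fun t ht => ?_⟩
  have : dist t 0 < δ := by
    rw [Real.dist_eq, sub_zero, abs_lt]
    exact ⟨by have := ht.1; linarith, by have := ht.2; linarith⟩
  exact hball this

theorem uniq_package (n : ℕ) {lam mu ε : ℝ} (hlam : lam ≠ 0) (hmu : 0 < mu) (hε : 0 < ε)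
    {f : ℝ → ℝ × ℝ × ℝ} (hf0 : f 0 = (0, mu, 0))
    (hf' : ∀ t ∈ Ioo (-ε) ε, HasDerivAt f (solV n lam (f t)) t)
    (hid : ∀ t ∈ Ioo (-ε) ε, (f t).1 = t)
    (hpos : ∀ t ∈ Ioo (-ε) ε, 0 < (f t).2.1 ∧ 0 < (f t).2.1 - t * (f t).2.2)
    {r₂ : ℝ → ℝ}
    (hc₂ : ContDiffOn ℝ 2 r₂ (Set.Ico 0 ε))
    (h0₂ : r₂ 0 = mu)
    (h0'₂ : derivWithin r₂ (Set.Ico 0 ε) 0 = 0)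
    (h0''₂ : derivWithin (derivWithin r₂ (Set.Ico 0 ε)) (Set.Ico 0 ε) 0 =
      ((n : ℝ) - 1 - 1 / lam) / mu)
    (heq₂ : ∀ y ∈ Set.Ioo (0 : ℝ) ε,
      derivWithin (derivWithin r₂ (Set.Ico 0 ε)) (Set.Ico 0 ε) y /
          (1 + (derivWithin r₂ (Set.Ico 0 ε) y) ^ 2) =
        ((n : ℝ) - 1) / r₂ y -
          (1 + (derivWithin r₂ (Set.Ico 0 ε) y) ^ 2) /
            (lam * (r₂ y - y * derivWithin r₂ (Set.Ico 0 ε) y))) :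
    ∀ b ∈ Ico (0:ℝ) ε, f b = (b, r₂ b, derivWithin r₂ (Set.Ico 0 ε) b) := by
  set s₀ : Set ℝ := Ico (0:ℝ) ε with hs₀def
  have hsubO : s₀ ⊆ Ioo (-ε) ε := fun t ht => ⟨lt_of_lt_of_le (neg_lt_zero.mpr hε) ht.1, ht.2⟩
  set w₂ : ℝ → ℝ := derivWithin r₂ s₀ with hw₂def
  have hUD : UniqueDiffOn ℝ s₀ := uniqueDiffOn_Ico 0 ε
  rw [show ((2 : WithTop ℕ∞)) = 1 + 1 by norm_num,
    contDiffOn_succ_iff_derivWithin hUD] at hc₂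
  obtain ⟨hdiff₂, -, hw₂cd⟩ := hc₂
  have hw₂diff : DifferentiableOn ℝ w₂ s₀ := hw₂cd.differentiableOn one_ne_zero
  have hr₂cont : ContinuousOn r₂ s₀ := hdiff₂.continuousOn
  have hw₂cont : ContinuousOn w₂ s₀ := hw₂cd.continuousOn
  set f₂ : ℝ → ℝ × ℝ × ℝ := fun t => (t, r₂ t, w₂ t) with hf₂def
  have hf₂cont : ContinuousOn f₂ s₀ := continuousOn_id.prodMk (hr₂cont.prodMk hw₂cont)
  have hf₂0 : f₂ 0 = (0, mu, 0) := by
    simp only [hf₂def, h0₂]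
    rw [show w₂ 0 = 0 from h0'₂]
  have hG₂ : ∀ t ∈ s₀, derivWithin w₂ s₀ t = solG n lam (f₂ t) := by
    intro t ht
    rcases eq_or_lt_of_le ht.1 with h | h
    · rw [← h, show f₂ 0 = (0, mu, 0) from hf₂0, solG_init n hlam hmu.ne']
      exact h0''₂
    · have hne : (1 + w₂ t ^ 2) ≠ 0 := by positivity
      have h' := (div_eq_iff hne).mp (heq₂ t ⟨h, ht.2⟩)
      show derivWithin w₂ s₀ t =
        (1 + w₂ t ^ 2) * (((n : ℝ) - 1) / r₂ t - (1 + w₂ t ^ 2) / (lam * (r₂ t - t * w₂ t)))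
      rw [h']
      ring
  have hF₂ : ∀ t ∈ s₀, HasDerivWithinAt f₂ (solV n lam (f₂ t)) s₀ t := by
    intro t ht
    have h1 : HasDerivWithinAt (fun s : ℝ => s) 1 s₀ t := (hasDerivAt_id t).hasDerivWithinAt
    have h2 : HasDerivWithinAt r₂ (w₂ t) s₀ t := (hdiff₂ t ht).hasDerivWithinAt
    have h3 : HasDerivWithinAt w₂ (solG n lam (f₂ t)) s₀ t :=
      hG₂ t ht ▸ (hw₂diff t ht).hasDerivWithinAt
    exact h1.prodMk (h2.prodMk h3)
  -- local forward uniqueness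
  have hloc : ∀ c ∈ s₀, f c = f₂ c → ∀ᶠ t in nhdsWithin c (Ici c), f t = f₂ t := by
    intro c hc hceq
    have hcmem : c ∈ Ioo (-ε) ε := hsubO hc
    have hdom1 : (f c).2.1 ≠ 0 := (hpos c hcmem).1.ne'
    have hdom2 : (f c).2.1 - (f c).1 * (f c).2.2 ≠ 0 := by
      rw [hid c hcmem]
      exact (hpos c hcmem).2.ne'
    obtain ⟨K, sK, hsK, hlip⟩ := (contDiffAt_solV n hlam hdom1 hdom2).exists_lipschitzOnWith
    have hf_ev : ∀ᶠ t in nhds c, f t ∈ sK :=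
      (hf' c hcmem).continuousAt.eventually_mem hsK
    have hsK' : sK ∈ nhds (f₂ c) := hceq ▸ hsK
    have hf₂_ev : ∀ᶠ t in nhdsWithin c s₀, f₂ t ∈ sK := (hf₂cont c hc) hsK'
    have hev : ∀ᶠ t in nhds c, t ∈ s₀ → (f t ∈ sK ∧ f₂ t ∈ sK) := by
      rw [eventually_nhdsWithin_iff] at hf₂_ev
      filter_upwards [hf_ev, hf₂_ev] with t h1 h2 h3
      exact ⟨h1, h2 h3⟩
    rw [Metric.eventually_nhds_iff] at hev
    obtain ⟨δ, hδ, hb⟩ := hev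
    set d := min (c + δ / 2) ((c + ε) / 2) with hd
    have hcε : c < ε := hc.2
    have hcd : c < d := lt_min (by linarith) (by linarith)
    have hdε : d < ε := lt_of_le_of_lt (min_le_right _ _) (by linarith)
    have hIccsub : Icc c d ⊆ s₀ := fun t ht => ⟨hc.1.trans ht.1, lt_of_le_of_lt ht.2 hdε⟩
    have hIccO : Icc c d ⊆ Ioo (-ε) ε := fun t ht => hsubO (hIccsub ht)
    have hmemK : ∀ t ∈ Icc c d, f t ∈ sK ∧ f₂ t ∈ sK := by
      intro t ht
      apply hb ?_ (hIccsub ht)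
      rw [Real.dist_eq, abs_of_nonneg (by linarith [ht.1])]
      have h1 : t ≤ c + δ / 2 := ht.2.trans (min_le_left _ _)
      linarith
    have hkey : EqOn f f₂ (Icc c d) := by
      apply ODE_solution_unique_of_mem_Icc_right (v := fun _ x => solV n lam x)
        (s := fun _ => sK) (K := K) (fun _ _ => hlip)
        (fun t ht => (hf' t (hIccO ht)).continuousAt.continuousWithinAt)
        (fun t ht => (hf' t (hIccO (Ico_subset_Icc_self ht))).hasDerivWithinAt)
        (fun t ht => (hmemK t (Ico_subset_Icc_self ht)).1)
        (hf₂cont.mono hIccsub)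
        (fun t ht => ?_)
        (fun t ht => (hmemK t (Ico_subset_Icc_self ht)).2)
        hceq
      have ht' : t ∈ s₀ := hIccsub (Ico_subset_Icc_self ht)
      exact (hF₂ t ht').mono_of_mem_nhdsWithin (Ico_mem_nhdsGE_of_mem ht')
    exact Filter.eventually_of_mem (Icc_mem_nhdsGE_of_mem ⟨le_rfl, hcd⟩) hkey
  -- global forward uniqueness by an infimum argument
  intro b hb
  by_contra hne
  set D : Set ℝ := {t ∈ Icc 0 b | f t ≠ f₂ t} with hD
  have hbD : b ∈ D := ⟨⟨hb.1, le_rfl⟩, hne⟩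
  have hDne : D.Nonempty := ⟨b, hbD⟩
  have hDbdd : BddBelow D := ⟨0, fun t ht => ht.1.1⟩
  set c := sInf D with hcdef
  have hc0 : 0 ≤ c := le_csInf hDne fun t ht => ht.1.1
  have hcb : c ≤ b := csInf_le hDbdd hbD
  have hcs₀ : c ∈ s₀ := ⟨hc0, lt_of_le_of_lt hcb hb.2⟩
  have hlt : ∀ t, 0 ≤ t → t < c → f t = f₂ t := by
    intro t ht0 htc
    by_contra h
    exact absurd (csInf_le hDbdd ⟨⟨ht0, htc.le.trans hcb⟩, h⟩) (not_le.mpr htc)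
  have hceq : f c = f₂ c := by
    rcases eq_or_lt_of_le hc0 with h | h
    · rw [← h, hf0, hf₂0]
    · have hnb : (nhdsWithin c (Ioo 0 c)).NeBot := by
        rw [← mem_closure_iff_nhdsWithin_neBot, closure_Ioo h.ne]
        exact ⟨hc0, le_rfl⟩
      have hsub2 : Ioo (0:ℝ) c ⊆ s₀ := fun t ht =>
        ⟨ht.1.le, lt_of_lt_of_le ht.2 (hcb.trans hb.2.le)⟩
      have t1 : Filter.Tendsto f (nhdsWithin c (Ioo 0 c)) (nhds (f c)) :=
        (hf' c (hsubO hcs₀)).continuousAt.continuousWithinAt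
      have t2 : Filter.Tendsto f₂ (nhdsWithin c (Ioo 0 c)) (nhds (f₂ c)) :=
        (hf₂cont c hcs₀).mono hsub2
      have t1' : Filter.Tendsto f₂ (nhdsWithin c (Ioo 0 c)) (nhds (f c)) := by
        apply t1.congr'
        exact Filter.eventuallyEq_of_mem self_mem_nhdsWithin fun t ht => hlt t ht.1.le ht.2
      exact tendsto_nhds_unique t1' t2
  have hev := hloc c hcs₀ hceq
  rw [eventually_nhdsWithin_iff, Metric.eventually_nhds_iff] at hev
  obtain ⟨δ, hδ, hb'⟩ := hev
  obtain ⟨t, htD, htlt⟩ := (csInf_lt_iff hDbdd hDne).mp (show sInf D < c + δ by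
    rw [← hcdef]; linarith)
  have htc : c ≤ t := csInf_le hDbdd htD
  exact htD.2 (hb' (by rw [Real.dist_eq, abs_of_nonneg (by linarith)]; linarith)
    (mem_Ici.mpr htc))

/-- Short time existence and uniqueness of the solution of the inverse mean
curvature flow soliton ODE on `[0, y₀)` for any `λ ≠ 0`. -/
theorem short_time_existence (n : ℕ) (hn : 2 ≤ n) (lam : ℝ) (hlam : lam ≠ 0)
    (mu : ℝ) (hmu : 0 < mu) :
    ∃ y₀ : ℝ, 0 < y₀ ∧ ∃ r : ℝ → ℝ, IsLocalSolution n lam mu y₀ r ∧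
      ∀ r₂ : ℝ → ℝ, IsLocalSolution n lam mu y₀ r₂ →
        Set.EqOn r r₂ (Set.Ico 0 y₀) := by
  obtain ⟨ε, hε, f, hf0, hf', hid, hpos⟩ := exists_package n hlam hmu
  set O := Ioo (-ε) ε with hO
  have hsub : Ico 0 ε ⊆ O := fun t ht => ⟨lt_of_lt_of_le (neg_lt_zero.mpr hε) ht.1, ht.2⟩
  set r : ℝ → ℝ := fun t => (f t).2.1 with hrdef
  set w : ℝ → ℝ := fun t => (f t).2.2 with hwdef
  have hr' : ∀ t ∈ O, HasDerivAt r (w t) t := fun t ht => hd_snd_fst (hf' t ht)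
  have hw' : ∀ t ∈ O, HasDerivAt w (solG n lam (f t)) t := fun t ht => hd_snd_snd (hf' t ht)
  have hVc : ∀ t ∈ O, ContinuousAt (fun s => solV n lam (f s)) t := by
    intro t ht
    have h2 : (f t).2.1 - (f t).1 * (f t).2.2 ≠ 0 := by
      rw [hid t ht]
      exact (hpos t ht).2.ne'
    exact ((contDiffAt_solV n hlam (hpos t ht).1.ne' h2).continuousAt).comp
      (hf' t ht).differentiableAt.continuousAt
  have hw_cd : ContDiffOn ℝ 1 w O := by
    rw [show ((1 : WithTop ℕ∞)) = 0 + 1 by norm_num,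
      contDiffOn_succ_iff_deriv_of_isOpen isOpen_Ioo]
    refine ⟨fun t ht => (hw' t ht).differentiableAt.differentiableWithinAt, by simp, ?_⟩
    rw [contDiffOn_zero]
    exact ContinuousOn.congr (fun t ht => ((hVc t ht).snd.snd).continuousWithinAt)
      (fun t ht => (hw' t ht).deriv)
  have hCDO : ContDiffOn ℝ 2 r O := by
    rw [show ((2 : WithTop ℕ∞)) = 1 + 1 by norm_num,
      contDiffOn_succ_iff_deriv_of_isOpen isOpen_Ioo]
    refine ⟨fun t ht => (hr' t ht).differentiableAt.differentiableWithinAt, by simp, ?_⟩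
    exact hw_cd.congr fun t ht => (hr' t ht).deriv
  have hUD : UniqueDiffOn ℝ (Ico (0:ℝ) ε) := uniqueDiffOn_Ico 0 ε
  have hdw : ∀ t ∈ Ico (0:ℝ) ε, derivWithin r (Ico 0 ε) t = w t := fun t ht =>
    (hr' t (hsub ht)).hasDerivWithinAt.derivWithin (hUD t ht)
  have hdw2 : ∀ t ∈ Ico (0:ℝ) ε,
      derivWithin (derivWithin r (Ico 0 ε)) (Ico 0 ε) t = solG n lam (f t) := by
    intro t ht
    rw [derivWithin_congr hdw (hdw t ht)]
    exact (hw' t (hsub ht)).hasDerivWithinAt.derivWithin (hUD t ht)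
  have h0mem : (0:ℝ) ∈ Ico (0:ℝ) ε := ⟨le_rfl, hε⟩
  refine ⟨ε, hε, r, ⟨hCDO.mono hsub, fun y hy => (hpos y (hsub hy)).1, ?_, ?_, ?_, ?_, ?_⟩, ?_⟩
  · intro y hy
    rw [hdw y hy]
    have := (hpos y (hsub hy)).2
    linarith
  · show (f 0).2.1 = mu
    rw [hf0]
  · rw [hdw 0 h0mem]
    show (f 0).2.2 = 0
    rw [hf0]
  · rw [hdw2 0 h0mem, hf0, solG_init n hlam hmu.ne']
  · intro y hy
    have hy' : y ∈ Ico (0:ℝ) ε := ⟨hy.1.le, hy.2⟩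
    rw [hdw y hy', hdw2 y hy']
    have h1 : (f y).1 = y := hid y (hsub hy')
    have hne : (1 + (f y).2.2 ^ 2) ≠ 0 := by positivity
    show (1 + (f y).2.2 ^ 2) *
        (((n : ℝ) - 1) / (f y).2.1 -
          (1 + (f y).2.2 ^ 2) / (lam * ((f y).2.1 - (f y).1 * (f y).2.2))) /
        (1 + (f y).2.2 ^ 2) = _
    rw [h1, mul_div_cancel_left₀ _ hne]
  · intro r₂ hsol
    obtain ⟨hc₂, -, -, h0₂, h0'₂, h0''₂, heq₂⟩ := hsol
    intro y hy
    exact congrArg (fun p => p.2.1)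
      (uniq_package n hlam hmu hε hf0 hf' hid hpos hc₂ h0₂ h0'₂ h0''₂ heq₂ y hy)
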